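/- Let P be a non-empty closed convex set of BCEs. The set of separated BCEs contained in P is either dense in P or nowhere dense in P. -/
import Mathlib


open Finset

variable {I : Type} [Fintype I] [DecidableEq I]
  {A : I → Type} [∀ i, Fintype (A i)] [∀ i, DecidableEq (A i)]
  {Θ : Type} [Fintype Θ]

/-- The marginal probability that player `i` plays `ai` under outcome `p`. -/
noncomputable def marg (p : ((∀ j, A j) × Θ) → ℝ) (i : I) (ai : A i) : ℝ :=
  ∑ x : (∀ j, A j) × Θ, if x.1 i = ai then p x else 0

/-- The conditional belief of player `i` given recommendation `ai`, represented
as a function on full profile-state pairs that ignores the `i`-th coordinate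
(it is overridden by `ai`).  It is the zero function if `marg p i ai = 0`. -/
noncomputable def condBelief (p : ((∀ j, A j) × Θ) → ℝ) (i : I) (ai : A i) :
    ((∀ j, A j) × Θ) → ℝ :=
  fun x => p (Function.update x.1 i ai, x.2) / marg p i ai

/-- Expected utility for player `i` of playing `ci` against belief `μ`. -/
noncomputable def dev (u : ((∀ j, A j) × Θ) → ℝ) (i : I) (ci : A i)
    (μ : ((∀ j, A j) × Θ) → ℝ) : ℝ :=
  ∑ x : (∀ j, A j) × Θ, u (Function.update x.1 i ci, x.2) * μ x

/-- Best responses of player `i` (with utility `u`) to belief `μ`. -/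
noncomputable def BRset (u : ((∀ j, A j) × Θ) → ℝ) (i : I)
    (μ : ((∀ j, A j) × Θ) → ℝ) : Set (A i) :=
  {ci | ∀ di : A i, dev u i di μ ≤ dev u i ci μ}

/-- The obedience constraint defining a Bayes correlated equilibrium. -/
def Obedient (u : ∀ i : I, ((∀ j, A j) × Θ) → ℝ) (p : ((∀ j, A j) × Θ) → ℝ) : Prop :=
  ∀ i : I, ∀ ai bi : A i,
    0 ≤ ∑ x : (∀ j, A j) × Θ,
      (if x.1 i = ai then (u i x - u i (Function.update x.1 i bi, x.2)) * p x else 0)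

/-- The separation constraint: recommendations inducing distinct beliefs have
disjoint best-response sets. -/
def Separated (u : ∀ i : I, ((∀ j, A j) × Θ) → ℝ) (p : ((∀ j, A j) × Θ) → ℝ) : Prop :=
  ∀ i : I, ∀ ai bi : A i, 0 < marg p i ai → 0 < marg p i bi →
    condBelief p i ai ≠ condBelief p i bi →
    BRset (u i) i (condBelief p i ai) ∩ BRset (u i) i (condBelief p i bi) = ∅

/-- `p` is an outcome with `Θ`-marginal `π`. -/
def IsOutcome (π : Θ → ℝ) (p : ((∀ j, A j) × Θ) → ℝ) : Prop :=
  (∀ x, 0 ≤ p x) ∧ ∀ θ, (∑ a : ∀ j, A j, p (a, θ)) = π θ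

section AuxLemmas


lemma marg_nonneg (p : ((∀ j, A j) × Θ) → ℝ) (hp : ∀ x, 0 ≤ p x) (i : I) (a : A i) :
    0 ≤ marg p i a :=
  Finset.sum_nonneg fun x _ => by by_cases h : x.1 i = a <;> simp [h, hp x]

lemma marg_zero_forall {p : ((∀ j, A j) × Θ) → ℝ} (hp : ∀ x, 0 ≤ p x) {i : I} {a : A i}
    (h : marg p i a = 0) : ∀ y : (∀ j, A j) × Θ, y.1 i = a → p y = 0 := by
  intro y hy
  have h0 := (Finset.sum_eq_zero_iff_of_nonneg
    (fun x _ => by by_cases hx : x.1 i = a <;> simp [hx, hp x])).1 h y (Finset.mem_univ y)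
  simpa [hy] using h0

lemma marg_smul_add (r s : ℝ) (p q : ((∀ j, A j) × Θ) → ℝ) (i : I) (a : A i) :
    marg (fun x => r * p x + s * q x) i a = r * marg p i a + s * marg q i a := by
  unfold marg
  rw [Finset.mul_sum, Finset.mul_sum, ← Finset.sum_add_distrib]
  refine Finset.sum_congr rfl fun x _ => ?_
  by_cases h : x.1 i = a <;> simp [h]

lemma sum_update_pi (i : I) (a : A i) (f : (∀ j, A j) → ℝ) :
    ∑ y : ∀ j, A j, f (Function.update y i a)
      = (Fintype.card (A i) : ℝ) * ∑ y : ∀ j, A j, if y i = a then f y else 0 := by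
  classical
  set e := Equiv.piSplitAt i A with he
  have key : ∀ (v : A i) (r : ∀ j : {j // j ≠ i}, A j),
      Function.update (e.symm (v, r)) i a = e.symm (a, r) := by
    intro v r
    funext j
    by_cases h : j = i
    · subst h; simp [Function.update_self, he, Equiv.piSplitAt]
    · simp [Function.update_of_ne h, he, Equiv.piSplitAt, h]
  have hcoord : ∀ (v : A i) (r : ∀ j : {j // j ≠ i}, A j), (e.symm (v, r)) i = v := by
    intro v r; simp [he, Equiv.piSplitAt]
  calc ∑ y : ∀ j, A j, f (Function.update y i a)
      = ∑ z : A i × ∀ j : {j // j ≠ i}, A j, f (Function.update (e.symm z) i a) :=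
        (Equiv.sum_comp e.symm _).symm
    _ = ∑ z : A i × ∀ j : {j // j ≠ i}, A j, f (e.symm (a, z.2)) := by
        refine Finset.sum_congr rfl fun z _ => by rw [key z.1 z.2]
    _ = (Fintype.card (A i) : ℝ) * ∑ r : ∀ j : {j // j ≠ i}, A j, f (e.symm (a, r)) := by
        rw [Fintype.sum_prod_type]
        simp [Finset.sum_const, nsmul_eq_mul, Finset.mul_sum]
    _ = (Fintype.card (A i) : ℝ) * ∑ y : ∀ j, A j, if y i = a then f y else 0 := by
        congr 1
        rw [← Equiv.sum_comp e.symm (fun y => if y i = a then f y else 0)]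
        rw [Fintype.sum_prod_type]
        rw [Finset.sum_comm]
        refine Finset.sum_congr rfl fun r _ => ?_
        simp only [hcoord]
        rw [Finset.sum_ite_eq' Finset.univ a (fun v => f (e.symm (v, r)))]
        simp

lemma sum_update (i : I) (a : A i) (f : ((∀ j, A j) × Θ) → ℝ) :
    ∑ x : (∀ j, A j) × Θ, f (Function.update x.1 i a, x.2)
      = (Fintype.card (A i) : ℝ) * ∑ x : (∀ j, A j) × Θ, if x.1 i = a then f x else 0 := by
  have h1 : ∑ x : (∀ j, A j) × Θ, f (Function.update x.1 i a, x.2)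
      = ∑ θ : Θ, ∑ y : ∀ j, A j, f (Function.update y i a, θ) := by
    rw [Fintype.sum_prod_type]; exact Finset.sum_comm
  have h2 : ∑ x : (∀ j, A j) × Θ, (if x.1 i = a then f x else 0)
      = ∑ θ : Θ, ∑ y : ∀ j, A j, (if y i = a then f (y, θ) else 0) := by
    rw [Fintype.sum_prod_type]; exact Finset.sum_comm
  rw [h1, h2, Finset.mul_sum]
  exact Finset.sum_congr rfl fun θ _ => sum_update_pi i a (fun y => f (y, θ))

lemma dev_condBelief (u' : ((∀ j, A j) × Θ) → ℝ) (i : I) (c a : A i)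
    (p : ((∀ j, A j) × Θ) → ℝ) (hm : marg p i a ≠ 0) :
    dev u' i c (condBelief p i a)
      = (Fintype.card (A i) : ℝ) / marg p i a *
        ∑ x : (∀ j, A j) × Θ, if x.1 i = a then u' (Function.update x.1 i c, x.2) * p x else 0 := by
  unfold dev condBelief
  have h1 : ∀ x : (∀ j, A j) × Θ,
      u' (Function.update x.1 i c, x.2) * (p (Function.update x.1 i a, x.2) / marg p i a)
        = (fun y : (∀ j, A j) × Θ => u' (Function.update y.1 i c, y.2) * p y)
            (Function.update x.1 i a, x.2) / marg p i a := by
    intro x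
    simp only [Function.update_idem]
    ring
  rw [Finset.sum_congr rfl fun x _ => h1 x, ← Finset.sum_div,
    sum_update i a (fun y : (∀ j, A j) × Θ => u' (Function.update y.1 i c, y.2) * p y)]
  ring

lemma obedient_mem_BR {u : ∀ i : I, ((∀ j, A j) × Θ) → ℝ} {p : ((∀ j, A j) × Θ) → ℝ}
    (hob : Obedient u p) (hp : ∀ x, 0 ≤ p x) {i : I} {a : A i} (hm : 0 < marg p i a) :
    a ∈ BRset (u i) i (condBelief p i a) := by
  intro d
  rw [dev_condBelief _ _ _ _ _ hm.ne', dev_condBelief _ _ _ _ _ hm.ne']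
  have key := hob i a d
  have hcard : (0:ℝ) < (Fintype.card (A i) : ℝ) := by
    exact_mod_cast Fintype.card_pos_iff.2 ⟨a⟩
  have hsplit : ∑ x : (∀ j, A j) × Θ, (if x.1 i = a then (u i x - u i (Function.update x.1 i d, x.2)) * p x else 0)
      = (∑ x : (∀ j, A j) × Θ, if x.1 i = a then u i (Function.update x.1 i a, x.2) * p x else 0)
        - ∑ x : (∀ j, A j) × Θ, if x.1 i = a then u i (Function.update x.1 i d, x.2) * p x else 0 := by
    rw [← Finset.sum_sub_distrib]
    refine Finset.sum_congr rfl fun x _ => ?_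
    by_cases h : x.1 i = a
    · simp only [h, if_true]
      have hx : (Function.update x.1 i a, x.2) = x := by
        rw [show Function.update x.1 i a = x.1 by rw [← h]; exact Function.update_eq_self i x.1]
      rw [hx]; ring
    · simp [h]
  have hS : ∑ x : (∀ j, A j) × Θ, (if x.1 i = a then u i (Function.update x.1 i d, x.2) * p x else 0)
      ≤ ∑ x : (∀ j, A j) × Θ, if x.1 i = a then u i (Function.update x.1 i a, x.2) * p x else 0 := by
    rw [hsplit] at key; linarith
  have hfac : 0 ≤ (Fintype.card (A i) : ℝ) / marg p i a := by positivity
  exact mul_le_mul_of_nonneg_left hS hfac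

lemma dev_combo (u' : ((∀ j, A j) × Θ) → ℝ) (i : I) (c : A i) (α β : ℝ)
    (μ ν : ((∀ j, A j) × Θ) → ℝ) :
    dev u' i c (fun x => α * μ x + β * ν x) = α * dev u' i c μ + β * dev u' i c ν := by
  unfold dev
  rw [Finset.mul_sum, Finset.mul_sum, ← Finset.sum_add_distrib]
  exact Finset.sum_congr rfl fun x _ => by ring

lemma BR_combo {u' : ((∀ j, A j) × Θ) → ℝ} {i : I} {μ ν : ((∀ j, A j) × Θ) → ℝ} {a c : A i}
    (ha : a ∈ BRset u' i μ) (ha' : a ∈ BRset u' i ν) {α β : ℝ} (hα : 0 < α) (hβ : 0 ≤ β)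
    (hc : c ∈ BRset u' i (fun x => α * μ x + β * ν x)) : c ∈ BRset u' i μ := by
  intro d
  have h1 := hc a
  rw [dev_combo, dev_combo] at h1
  have h2 : dev u' i c μ ≤ dev u' i a μ := ha c
  have h3 : dev u' i c ν ≤ dev u' i a ν := ha' c
  have heq : dev u' i c μ = dev u' i a μ := by nlinarith
  calc dev u' i d μ ≤ dev u' i a μ := ha d
    _ = dev u' i c μ := heq.symm

lemma condBelief_combo_zero {p q : ((∀ j, A j) × Θ) → ℝ} (hq0 : ∀ x, 0 ≤ q x) {i : I} {a : A i}
    (hmp : marg p i a ≠ 0) (hmq : marg q i a = 0) {t : ℝ} (ht : 0 < t) :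
    condBelief (fun x => t * p x + (1 - t) * q x) i a = condBelief p i a := by
  funext x
  unfold condBelief
  have h1 : q (Function.update x.1 i a, x.2) = 0 :=
    marg_zero_forall hq0 hmq _ (Function.update_self i a x.1)
  rw [marg_smul_add, hmq, mul_zero, add_zero]
  show (t * p (Function.update x.1 i a, x.2) + (1 - t) * q (Function.update x.1 i a, x.2))
      / (t * marg p i a) = _
  rw [h1, mul_zero, add_zero, mul_div_mul_left _ _ ht.ne']

lemma condBelief_combo {p q : ((∀ j, A j) × Θ) → ℝ} {i : I} {a : A i}
    (hmp : 0 < marg p i a) (hmq : 0 < marg q i a) {t : ℝ} (ht : 0 < t) (ht1 : t < 1) :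
    condBelief (fun x => t * p x + (1 - t) * q x) i a
      = fun x => (t * marg p i a / marg (fun x => t * p x + (1 - t) * q x) i a)
            * condBelief p i a x
          + (1 - t * marg p i a / marg (fun x => t * p x + (1 - t) * q x) i a)
            * condBelief q i a x := by
  have hms : marg (fun x => t * p x + (1 - t) * q x) i a
      = t * marg p i a + (1 - t) * marg q i a := marg_smul_add t (1 - t) p q i a
  have hpos : 0 < marg (fun x => t * p x + (1 - t) * q x) i a := by
    rw [hms]; nlinarith
  funext x
  unfold condBelief
  rw [hms]
  have hne : t * marg p i a + (1 - t) * marg q i a ≠ 0 := by rw [hms] at hpos; exact hpos.ne'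
  have h1 : (1 : ℝ) - t * marg p i a / (t * marg p i a + (1 - t) * marg q i a)
      = (1 - t) * marg q i a / (t * marg p i a + (1 - t) * marg q i a) := by
    rw [one_sub_div hne]
    congr 1
    ring
  rw [h1]
  show (t * p (Function.update x.1 i a, x.2) + (1 - t) * q (Function.update x.1 i a, x.2))
      / (t * marg p i a + (1 - t) * marg q i a) = _
  have hne2 : t * marg p i a - t * marg q i a + marg q i a ≠ 0 := by
    have h3 : t * marg p i a - t * marg q i a + marg q i a
        = t * marg p i a + (1 - t) * marg q i a := by ring
    rw [h3]; exact hne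
  field_simp [hne2]

def PhiSep (p : ((∀ j, A j) × Θ) → ℝ) (i : I) (a b : A i) : Prop :=
  0 < marg p i a ∧ 0 < marg p i b ∧ condBelief p i a ≠ condBelief p i b

def MixSet (P : Set (((∀ j, A j) × Θ) → ℝ)) : Set (((∀ j, A j) × Θ) → ℝ) :=
  {p | ∀ (i : I) (a b : A i), (∃ w ∈ P, PhiSep w i a b) → PhiSep p i a b}

lemma separated_combo {u : ∀ i : I, ((∀ j, A j) × Θ) → ℝ}
    {P : Set (((∀ j, A j) × Θ) → ℝ)} (hPcv : Convex ℝ P)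
    (hPnn : ∀ p ∈ P, ∀ x, 0 ≤ p x) (hPob : ∀ p ∈ P, Obedient u p)
    {p q : ((∀ j, A j) × Θ) → ℝ} (hp : p ∈ P) (hq : q ∈ P)
    (hmix : p ∈ MixSet P) (hsep : Separated u p) {t : ℝ} (ht0 : 0 < t) (ht1 : t < 1) :
    Separated u (fun x => t * p x + (1 - t) * q x) := by
  intro i a b hsa hsb hsne
  have hsP : (fun x => t * p x + (1 - t) * q x) ∈ P := by
    have h := hPcv hp hq (le_of_lt ht0) (by linarith : (0:ℝ) ≤ 1 - t) (by ring)
    have heq : (fun x => t * p x + (1 - t) * q x) = t • p + (1 - t) • q := by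
      funext x; simp [Pi.smul_apply, smul_eq_mul]
    rw [heq]; exact h
  obtain ⟨hpa, hpb, hpne⟩ := hmix i a b ⟨_, hsP, hsa, hsb, hsne⟩
  have hdisj := hsep i a b hpa hpb hpne
  have hp0 : ∀ x, 0 ≤ p x := hPnn p hp
  have hq0 : ∀ x, 0 ≤ q x := hPnn q hq
  have key : ∀ a' : A i, 0 < marg (fun x => t * p x + (1 - t) * q x) i a' →
      0 < marg p i a' →
      BRset (u i) i (condBelief (fun x => t * p x + (1 - t) * q x) i a')
        ⊆ BRset (u i) i (condBelief p i a') := by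
    intro a' hsa' hpa'
    rcases eq_or_lt_of_le (marg_nonneg q hq0 i a') with hq' | hq'
    · rw [condBelief_combo_zero hq0 hpa'.ne' hq'.symm ht0]
    · rw [condBelief_combo hpa' hq' ht0 ht1]
      intro c hc
      have hms : marg (fun x => t * p x + (1 - t) * q x) i a'
          = t * marg p i a' + (1 - t) * marg q i a' := marg_smul_add t (1 - t) p q i a'
      have hα : 0 < t * marg p i a' / marg (fun x => t * p x + (1 - t) * q x) i a' := by
        apply div_pos (by positivity) hsa'
      have hβ : 0 ≤ 1 - t * marg p i a' / marg (fun x => t * p x + (1 - t) * q x) i a' := by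
        have : t * marg p i a' / marg (fun x => t * p x + (1 - t) * q x) i a' ≤ 1 := by
          rw [div_le_one hsa', hms]
          nlinarith
        linarith
      exact BR_combo (obedient_mem_BR (hPob p hp) hp0 hpa')
        (obedient_mem_BR (hPob q hq) hq0 hq') hα hβ hc
  rw [Set.eq_empty_iff_forall_notMem]
  rintro c ⟨hca, hcb⟩
  exact Set.eq_empty_iff_forall_notMem.1 hdisj c ⟨key a hsa hpa hca, key b hsb hpb hcb⟩

lemma continuous_marg (i : I) (a : A i) :
    Continuous fun p : ((∀ j, A j) × Θ) → ℝ => marg p i a := by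
  unfold marg
  refine continuous_finset_sum _ fun x _ => ?_
  by_cases h : x.1 i = a
  · simpa [h] using continuous_apply x
  · simp [h]
    exact continuous_const

lemma isOpen_PhiSep (i : I) (a b : A i) :
    IsOpen {p : ((∀ j, A j) × Θ) → ℝ | PhiSep p i a b} := by
  rw [isOpen_iff_mem_nhds]
  rintro p ⟨h1, h2, h3⟩
  obtain ⟨x₀, hx₀⟩ := Function.ne_iff.1 h3
  have c1 : ContinuousAt (fun p' : ((∀ j, A j) × Θ) → ℝ => condBelief p' i a x₀) p := by
    exact ContinuousAt.div (continuous_apply _).continuousAt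
      (continuous_marg i a).continuousAt h1.ne'
  have c2 : ContinuousAt (fun p' : ((∀ j, A j) × Θ) → ℝ => condBelief p' i b x₀) p := by
    exact ContinuousAt.div (continuous_apply _).continuousAt
      (continuous_marg i b).continuousAt h2.ne'
  have hm1 : ∀ᶠ p' in nhds p, 0 < marg p' i a :=
    (continuous_marg i a).continuousAt (isOpen_Ioi.mem_nhds h1)
  have hm2 : ∀ᶠ p' in nhds p, 0 < marg p' i b :=
    (continuous_marg i b).continuousAt (isOpen_Ioi.mem_nhds h2)
  have hdiff : ContinuousAt
      (fun p' : ((∀ j, A j) × Θ) → ℝ => condBelief p' i a x₀ - condBelief p' i b x₀) p :=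
    c1.sub c2
  have hne : ∀ᶠ p' in nhds p,
      condBelief p' i a x₀ - condBelief p' i b x₀ ≠ 0 :=
    hdiff (isOpen_ne.mem_nhds (sub_ne_zero.2 hx₀))
  filter_upwards [hm1, hm2, hne] with p' h1' h2' h3'
  exact ⟨h1', h2', fun h => h3' (by rw [congrFun h x₀]; ring)⟩

lemma isOpen_MixSet (P : Set (((∀ j, A j) × Θ) → ℝ)) : IsOpen (MixSet P) := by
  have hrw : MixSet P = ⋂ i : I, ⋂ a : A i, ⋂ b : A i,
      {p | (∃ w ∈ P, PhiSep w i a b) → PhiSep p i a b} := by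
    ext p; simp [MixSet, Set.mem_iInter]
  rw [hrw]
  refine isOpen_iInter_of_finite fun i => isOpen_iInter_of_finite fun a =>
    isOpen_iInter_of_finite fun b => ?_
  by_cases h : ∃ w ∈ P, PhiSep w i a b
  · have : {p : ((∀ j, A j) × Θ) → ℝ | (∃ w ∈ P, PhiSep w i a b) → PhiSep p i a b}
        = {p | PhiSep p i a b} := by ext p; simp [h]
    rw [this]; exact isOpen_PhiSep i a b
  · have : {p : ((∀ j, A j) × Θ) → ℝ | (∃ w ∈ P, PhiSep w i a b) → PhiSep p i a b}
        = Set.univ := by ext p; simp [h]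
    rw [this]; exact isOpen_univ

lemma exists_small_nonroot (A2 A1 A0 : ℝ) (h1 : A2 + A1 + A0 ≠ 0) {δ : ℝ} (hδ : 0 < δ) :
    ∃ t : ℝ, 0 < t ∧ t < δ ∧ A2 * t ^ 2 + A1 * t + A0 ≠ 0 := by
  set Pq : Polynomial ℝ :=
    Polynomial.C A2 * Polynomial.X ^ 2 + Polynomial.C A1 * Polynomial.X + Polynomial.C A0 with hPq
  have heval : ∀ t : ℝ, Pq.eval t = A2 * t ^ 2 + A1 * t + A0 := by
    intro t; simp [hPq]
  have hP0 : Pq ≠ 0 := by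
    intro h
    apply h1
    have := heval 1
    rw [h] at this
    simpa using this.symm
  have hfin := Polynomial.finite_setOf_isRoot hP0
  have hinf : (Set.Ioo (0:ℝ) δ).Infinite := Set.Ioo_infinite hδ
  obtain ⟨t, ht⟩ := (hinf.diff hfin).nonempty
  refine ⟨t, ht.1.1, ht.1.2, ?_⟩
  rw [← heval]
  exact fun h => ht.2 h

lemma dense_mix {P : Set (((∀ j, A j) × Θ) → ℝ)} (hPcv : Convex ℝ P)
    (hPnn : ∀ p ∈ P, ∀ x, 0 ≤ p x) (s : Finset (Σ i : I, A i × A i)) :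
    ∀ c ∈ P, ∀ V : Set (((∀ j, A j) × Θ) → ℝ), IsOpen V → c ∈ V →
    ∃ c' ∈ P, c' ∈ V ∧ ∀ g ∈ s, (∃ w ∈ P, PhiSep w g.1 g.2.1 g.2.2) →
      PhiSep c' g.1 g.2.1 g.2.2 := by
  classical
  induction s using Finset.induction_on with
  | empty =>
    intro c hc V hV hcV
    exact ⟨c, hc, hcV, by simp⟩
  | @insert g s hg ih =>
    intro c hc V hV hcV
    obtain ⟨c₁, hc₁P, hc₁V, hc₁s⟩ := ih c hc V hV hcV
    by_cases hact : ∃ w ∈ P, PhiSep w g.1 g.2.1 g.2.2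
    · obtain ⟨w, hwP, hwΦ⟩ := hact
      obtain ⟨i, a, b⟩ := g
      -- the open set of constraints to preserve
      set O : Set (((∀ j, A j) × Θ) → ℝ) := V ∩ ⋂ g' ∈ s,
        {p | (∃ w ∈ P, PhiSep w g'.1 g'.2.1 g'.2.2) → PhiSep p g'.1 g'.2.1 g'.2.2} with hO
      have hOopen : IsOpen O := by
        refine hV.inter (isOpen_biInter_finset fun g' _ => ?_)
        by_cases h : ∃ w ∈ P, PhiSep w g'.1 g'.2.1 g'.2.2
        · have : {p : ((∀ j, A j) × Θ) → ℝ |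
              (∃ w ∈ P, PhiSep w g'.1 g'.2.1 g'.2.2) → PhiSep p g'.1 g'.2.1 g'.2.2}
              = {p | PhiSep p g'.1 g'.2.1 g'.2.2} := by ext p; simp [h]
          rw [this]; exact isOpen_PhiSep _ _ _
        · have : {p : ((∀ j, A j) × Θ) → ℝ |
              (∃ w ∈ P, PhiSep w g'.1 g'.2.1 g'.2.2) → PhiSep p g'.1 g'.2.1 g'.2.2}
              = Set.univ := by ext p; simp [h]
          rw [this]; exact isOpen_univ
      have hc₁O : c₁ ∈ O := ⟨hc₁V, Set.mem_iInter₂.2 fun g' hg' hact' => hc₁s g' hg' hact'⟩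
      set γ : ℝ → ((∀ j, A j) × Θ) → ℝ := fun t x => (1 - t) * c₁ x + t * w x with hγ
      have hγcont : Continuous γ := by
        refine continuous_pi fun x => ?_
        exact ((continuous_const.sub continuous_id).mul continuous_const).add
          (continuous_id.mul continuous_const)
      have hγ0 : γ 0 = c₁ := funext fun x => by simp [hγ]
      have hpre : γ ⁻¹' O ∈ nhds (0:ℝ) := by
        refine (hOopen.preimage hγcont).mem_nhds ?_
        rw [Set.mem_preimage, hγ0]; exact hc₁O
      obtain ⟨δ, hδpos, hδ⟩ := Metric.mem_nhds_iff.1 hpre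
      obtain ⟨hwa, hwb, hwne⟩ := hwΦ
      obtain ⟨x₀, hx₀⟩ := Function.ne_iff.1 hwne
      have hcross : w (Function.update x₀.1 i a, x₀.2) * marg w i b
          ≠ w (Function.update x₀.1 i b, x₀.2) * marg w i a := by
        intro h
        exact hx₀ ((div_eq_div_iff hwa.ne' hwb.ne').2 h)
      -- abbreviations
      set pa := c₁ (Function.update x₀.1 i a, x₀.2) with hpa
      set qa := w (Function.update x₀.1 i a, x₀.2) with hqa
      set pb := c₁ (Function.update x₀.1 i b, x₀.2) with hpb
      set qb := w (Function.update x₀.1 i b, x₀.2) with hqb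
      set ma := marg c₁ i a with hma
      set na := marg w i a with hna
      set mb := marg c₁ i b with hmb
      set nb := marg w i b with hnb
      have hsum : ((qa - pa) * (nb - mb) - (qb - pb) * (na - ma))
          + (pa * (nb - mb) + (qa - pa) * mb - (pb * (na - ma) + (qb - pb) * ma))
          + (pa * mb - pb * ma) = qa * nb - qb * na := by ring
      obtain ⟨t, ht0, htδ, hFt⟩ := exists_small_nonroot
        ((qa - pa) * (nb - mb) - (qb - pb) * (na - ma))
        (pa * (nb - mb) + (qa - pa) * mb - (pb * (na - ma) + (qb - pb) * ma))
        (pa * mb - pb * ma)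
        (by rw [hsum]; exact sub_ne_zero.2 hcross)
        (lt_min hδpos one_pos)
      have ht1 : t < 1 := lt_of_lt_of_le htδ (min_le_right _ _)
      have htδ' : t < δ := lt_of_lt_of_le htδ (min_le_left _ _)
      have hγtP : γ t ∈ P := by
        have h := hPcv hc₁P hwP (by linarith : (0:ℝ) ≤ 1 - t) (le_of_lt ht0) (by ring)
        have heq : γ t = (1 - t) • c₁ + t • w := funext fun x => by
          simp [hγ, Pi.smul_apply, smul_eq_mul]
        rw [heq]; exact h
      have hγtO : γ t ∈ O := by
        apply hδ
        rw [Metric.mem_ball, Real.dist_eq, sub_zero, abs_of_pos ht0]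
        exact htδ'
      have hmg : ∀ a' : A i, marg (γ t) i a' = (1 - t) * marg c₁ i a' + t * marg w i a' := by
        intro a'
        exact marg_smul_add (1 - t) t c₁ w i a'
      have hc₁nn : ∀ x, 0 ≤ c₁ x := hPnn c₁ hc₁P
      have hma' : 0 < marg (γ t) i a := by
        rw [hmg a]
        have h1 := marg_nonneg c₁ hc₁nn i a
        rw [← hma] at h1
        rw [← hma, ← hna]
        nlinarith
      have hmb' : 0 < marg (γ t) i b := by
        rw [hmg b]
        have h1 := marg_nonneg c₁ hc₁nn i b
        rw [← hmb] at h1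
        rw [← hmb, ← hnb]
        nlinarith
      have hexp : γ t (Function.update x₀.1 i a, x₀.2) * marg (γ t) i b
          - γ t (Function.update x₀.1 i b, x₀.2) * marg (γ t) i a
          = ((qa - pa) * (nb - mb) - (qb - pb) * (na - ma)) * t ^ 2
            + (pa * (nb - mb) + (qa - pa) * mb - (pb * (na - ma) + (qb - pb) * ma)) * t
            + (pa * mb - pb * ma) := by
        rw [hmg a, hmg b]
        simp only [hγ, ← hma, ← hna, ← hmb, ← hnb, ← hpa, ← hqa, ← hpb, ← hqb]
        ring
      have hFne : γ t (Function.update x₀.1 i a, x₀.2) * marg (γ t) i b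
          ≠ γ t (Function.update x₀.1 i b, x₀.2) * marg (γ t) i a := by
        intro h
        apply hFt
        rw [← hexp, h]
        ring
      have hnewΦ : PhiSep (γ t) i a b := by
        refine ⟨hma', hmb', fun h => hFne ?_⟩
        have hx := congrFun h x₀
        unfold condBelief at hx
        exact (div_eq_div_iff hma'.ne' hmb'.ne').1 hx
      refine ⟨γ t, hγtP, hγtO.1, ?_⟩
      intro g' hg' hact'
      rcases Finset.mem_insert.1 hg' with rfl | h
      · exact hnewΦ
      · exact (Set.mem_iInter₂.1 hγtO.2 g' h) hact'
    · refine ⟨c₁, hc₁P, hc₁V, ?_⟩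
      intro g' hg' hact'
      rcases Finset.mem_insert.1 hg' with rfl | h
      · exact absurd hact' hact
      · exact hc₁s g' h hact'

theorem stmt8_aux {I : Type} [Fintype I] [DecidableEq I]
    {A : I → Type} [∀ i, Fintype (A i)] [∀ i, DecidableEq (A i)]
    {Θ : Type} [Fintype Θ]
    (π : Θ → ℝ) (hπpos : ∀ θ, 0 < π θ) (hπ1 : ∑ θ, π θ = 1)
    (u : ∀ i : I, ((∀ j, A j) × Θ) → ℝ)
    (P : Set (((∀ j, A j) × Θ) → ℝ))
    (hPne : P.Nonempty) (hPcl : IsClosed P) (hPcv : Convex ℝ P)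
    (hPbce : ∀ p ∈ P, (∀ x, 0 ≤ p x) ∧ Obedient u p) :
    Dense {x : P | Separated u x.1} ∨
      interior (closure {x : P | Separated u x.1}) = ∅ := by
  classical
  have hPnn : ∀ p ∈ P, ∀ x, 0 ≤ p x := fun p hp => (hPbce p hp).1
  have hPob : ∀ p ∈ P, Obedient u p := fun p hp => (hPbce p hp).2
  by_cases hex : ∃ p ∈ P, p ∈ MixSet P ∧ Separated u p
  · -- dense case
    left
    obtain ⟨p, hpP, hpmix, hpsep⟩ := hex
    rw [dense_iff_inter_open]
    rintro U hU ⟨x, hxU⟩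
    obtain ⟨V, hV, rfl⟩ := isOpen_induced_iff.1 hU
    have hxV : (x : ((∀ j, A j) × Θ) → ℝ) ∈ V := hxU
    set γ : ℝ → ((∀ j, A j) × Θ) → ℝ := fun t y => t * p y + (1 - t) * x.1 y with hγ
    have hγcont : Continuous γ := by
      refine continuous_pi fun y => ?_
      exact (continuous_id.mul continuous_const).add
        ((continuous_const.sub continuous_id).mul continuous_const)
    have hγ0 : γ 0 = (x : ((∀ j, A j) × Θ) → ℝ) := funext fun y => by simp [hγ]
    have htn : Filter.Tendsto (fun n : ℕ => 1 / ((n : ℝ) + 1)) Filter.atTop (nhds 0) :=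
      tendsto_one_div_add_atTop_nhds_zero_nat
    have hcomp : Filter.Tendsto (fun n : ℕ => γ (1 / ((n : ℝ) + 1))) Filter.atTop
        (nhds (x : ((∀ j, A j) × Θ) → ℝ)) := by
      have := (hγcont.tendsto 0).comp htn
      rwa [hγ0] at this
    have hev1 : ∀ᶠ n : ℕ in Filter.atTop, γ (1 / ((n : ℝ) + 1)) ∈ V :=
      hcomp (hV.mem_nhds hxV)
    have hev2 : ∀ᶠ n : ℕ in Filter.atTop, (1 : ℝ) / ((n : ℝ) + 1) < 1 := by
      filter_upwards [Filter.eventually_gt_atTop 0] with n hn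
      rw [div_lt_one (by positivity)]
      have : (1:ℝ) ≤ (n:ℝ) := by exact_mod_cast hn
      linarith
    obtain ⟨n, hnV, hn1⟩ := (hev1.and hev2).exists
    have ht0 : (0:ℝ) < 1 / ((n : ℝ) + 1) := by positivity
    have hsP : γ (1 / ((n : ℝ) + 1)) ∈ P := by
      have h := hPcv hpP x.2 (le_of_lt ht0) (by linarith : (0:ℝ) ≤ 1 - 1 / ((n : ℝ) + 1))
        (by ring)
      have heq : γ (1 / ((n : ℝ) + 1))
          = (1 / ((n : ℝ) + 1)) • p + (1 - 1 / ((n : ℝ) + 1)) • x.1 :=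
        funext fun y => by simp [hγ, Pi.smul_apply, smul_eq_mul]
      rw [heq]; exact h
    have hssep : Separated u (γ (1 / ((n : ℝ) + 1))) :=
      separated_combo hPcv hPnn hPob hpP x.2 hpmix hpsep ht0 hn1
    exact ⟨⟨γ (1 / ((n : ℝ) + 1)), hsP⟩, hnV, hssep⟩
  · -- nowhere dense case
    right
    have hdenseM : Dense {x : P | (x : ((∀ j, A j) × Θ) → ℝ) ∈ MixSet P} := by
      rw [dense_iff_inter_open]
      rintro U hU ⟨x, hxU⟩
      obtain ⟨V, hV, rfl⟩ := isOpen_induced_iff.1 hU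
      obtain ⟨c', hc'P, hc'V, hc'mix⟩ :=
        dense_mix hPcv hPnn (Finset.univ : Finset (Σ i : I, A i × A i)) x.1 x.2 V hV hxU
      refine ⟨⟨c', hc'P⟩, hc'V, ?_⟩
      intro i a b hab
      exact hc'mix ⟨i, a, b⟩ (Finset.mem_univ _) hab
    have hsub : {x : P | Separated u x.1}
        ⊆ {x : P | (x : ((∀ j, A j) × Θ) → ℝ) ∉ MixSet P} := by
      intro x hx hmx
      exact hex ⟨x.1, x.2, hmx, hx⟩
    have hCclosed : IsClosed {x : P | (x : ((∀ j, A j) × Θ) → ℝ) ∉ MixSet P} := by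
      have : {x : P | (x : ((∀ j, A j) × Θ) → ℝ) ∉ MixSet P}
          = (Subtype.val ⁻¹' MixSet P)ᶜ := rfl
      rw [this]
      exact (((isOpen_MixSet P).preimage continuous_subtype_val)).isClosed_compl
    have hintC : interior {x : P | (x : ((∀ j, A j) × Θ) → ℝ) ∉ MixSet P} = ∅ := by
      rw [interior_eq_empty_iff_dense_compl]
      convert hdenseM using 1
      ext x; simp
    have := interior_mono (closure_minimal hsub hCclosed)
    rw [hintC] at this
    exact Set.subset_empty_iff.1 this

end AuxLemmas

/-- for a non-empty closed convex set `P` of BCEs, the set of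
separated BCEs in `P` is either dense or nowhere dense in `P`
(subspace topology). -/
theorem stmt8 {I : Type} [Fintype I] [DecidableEq I]
    {A : I → Type} [∀ i, Fintype (A i)] [∀ i, DecidableEq (A i)]
    {Θ : Type} [Fintype Θ]
    (π : Θ → ℝ) (hπpos : ∀ θ, 0 < π θ) (hπ1 : ∑ θ, π θ = 1)
    (u : ∀ i : I, ((∀ j, A j) × Θ) → ℝ)
    (P : Set (((∀ j, A j) × Θ) → ℝ))
    (hPne : P.Nonempty) (hPcl : IsClosed P) (hPcv : Convex ℝ P)
    (hPbce : ∀ p ∈ P, IsOutcome π p ∧ Obedient u p) :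
    Dense {x : P | Separated u x.1} ∨
      interior (closure {x : P | Separated u x.1}) = ∅ := by
  exact stmt8_aux π hπpos hπ1 u P hPne hPcl hPcv
    (fun p hp => ⟨(hPbce p hp).1.1, (hPbce p hp).2⟩)
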